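/- Let H be a Hopf algebra over a field k. The map from R(H^e) to H⊗H sending x⊗y to x_2 ⊗ S²(x_1)·y is an isomorphism of (H^e)-H-bimodules, where R(H^e) is H^e viewed as a right H-module via (x⊗y)←a = x a_2 ⊗ S(a_1) y (and left H^e-module by (a⊗b)→(x⊗y) = ax⊗yb), and the target H⊗H is a free right H-module via right multiplication on the first factor, with left H^e-action (a⊗b)→(x⊗y) = a_2 x ⊗ S²(a_1) y b. Its inverse sends x⊗y to x_2 ⊗ S(x_1)·y. -/

import Mathlib

/-!
Write `T_f (x ⊗ y) = x₂ ⊗ f(x₁) y`, so that `φ = T_{S²}` and `ψ = T_S`. By coassociativity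
`T_f ∘ T_g = T_{f ⋆ g}`, where `(f ⋆ g)(x) = f(x₂) g(x₁)` is the convolution for the co-opposite
coalgebra, and `T_{ηε} = id`. Since `S` is an anti-algebra map, `S ⋆ S² = S ∘ (S ⋆ id)` and
`S² ⋆ S = S ∘ (id ⋆ S)` (ordinary convolution inside), and both equal `ηε`.

In the algebra `H ⊗ H` one has `T_f (x ⊗ y) = Δ_f(x) (1 ⊗ y)` with `Δ_f(x) = x₂ ⊗ f(x₁)`, which is
multiplicative when `f` is an algebra map such as `S²`; hence
`φ ((u ⊗ 1) w (1 ⊗ y)) = Δ_{S²}(u) φ(w) (1 ⊗ y)`. Both source actions have this shape,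
`(x ⊗ y) ← a = (x ⊗ 1) ψ(a ⊗ 1) (1 ⊗ y)` and `(a ⊗ b) → m = (a ⊗ 1) m (1 ⊗ b)`, while the target
actions are `w ← a = w (a ⊗ 1)` and `(a ⊗ b) → w = Δ_{S²}(a) w (1 ⊗ b)`.
-/

open TensorProduct

noncomputable section

namespace Stmt1

variable {k : Type} [Field k] {H : Type} [Ring H] [HopfAlgebra k H]

variable (k H) in
def S : H →ₗ[k] H := HopfAlgebra.antipode k

variable (k H) in
def Δ : H →ₗ[k] H ⊗[k] H := Coalgebra.comul

variable (k H) in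
def mm : H ⊗[k] H →ₗ[k] H := LinearMap.mul' k H

variable (k H) in
def α : (H ⊗[k] H) ⊗[k] H ≃ₗ[k] H ⊗[k] (H ⊗[k] H) := TensorProduct.assoc k H H H

variable (k H) in
def cc : H ⊗[k] H ≃ₗ[k] H ⊗[k] H := TensorProduct.comm k H H

variable (k H) in
def ttc : (H ⊗[k] H) ⊗[k] (H ⊗[k] H) ≃ₗ[k] (H ⊗[k] H) ⊗[k] (H ⊗[k] H) :=
  TensorProduct.tensorTensorTensorComm k H H H H

variable (k H) in
/-- `x ⊗ y ↦ x_2 ⊗ S²(x_1)·y`, the claimed isomorphism. -/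
def φ : H ⊗[k] H →ₗ[k] H ⊗[k] H :=
  (TensorProduct.map LinearMap.id (mm k H ∘ₗ TensorProduct.map (S k H ∘ₗ S k H) LinearMap.id)) ∘ₗ
    (α k H).toLinearMap ∘ₗ TensorProduct.map (cc k H).toLinearMap LinearMap.id ∘ₗ
      TensorProduct.map (Δ k H) LinearMap.id

variable (k H) in
/-- `x ⊗ y ↦ x_2 ⊗ S(x_1)·y`, the claimed inverse. -/
def ψ : H ⊗[k] H →ₗ[k] H ⊗[k] H :=
  (TensorProduct.map LinearMap.id (mm k H ∘ₗ TensorProduct.map (S k H) LinearMap.id)) ∘ₗ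
    (α k H).toLinearMap ∘ₗ TensorProduct.map (cc k H).toLinearMap LinearMap.id ∘ₗ
      TensorProduct.map (Δ k H) LinearMap.id

variable (k H) in
/-- right `H`-action on `R(H^e)`: `(x⊗y) ← a = x a_2 ⊗ S(a_1) y`. -/
def ractSrc : (H ⊗[k] H) ⊗[k] H →ₗ[k] H ⊗[k] H :=
  (TensorProduct.map (mm k H)
      (mm k H ∘ₗ TensorProduct.map (S k H) LinearMap.id ∘ₗ (cc k H).toLinearMap)) ∘ₗ
    (ttc k H).toLinearMap ∘ₗ
      TensorProduct.map LinearMap.id ((cc k H).toLinearMap ∘ₗ Δ k H)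

variable (k H) in
/-- right `H`-action on the target: right multiplication on the first factor. -/
def ractTgt : (H ⊗[k] H) ⊗[k] H →ₗ[k] H ⊗[k] H :=
  (TensorProduct.map (mm k H) LinearMap.id) ∘ₗ (α k H).symm.toLinearMap ∘ₗ
    (TensorProduct.map LinearMap.id (cc k H).toLinearMap) ∘ₗ (α k H).toLinearMap

variable (k H) in
/-- left `H^e`-action on `R(H^e)`: `(a⊗b) → (x⊗y) = a x ⊗ y b`. -/
def lactSrc : (H ⊗[k] H) ⊗[k] (H ⊗[k] H) →ₗ[k] H ⊗[k] H :=
  (TensorProduct.map (mm k H) (mm k H ∘ₗ (cc k H).toLinearMap)) ∘ₗ (ttc k H).toLinearMap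

variable (k H) in
/-- left `H^e`-action on the target: `(a⊗b) → (x⊗y) = a_2 x ⊗ S²(a_1) y b`. -/
def lactTgt : (H ⊗[k] H) ⊗[k] (H ⊗[k] H) →ₗ[k] H ⊗[k] H :=
  (TensorProduct.map (mm k H)
      (mm k H ∘ₗ (cc k H).toLinearMap ∘ₗ
        TensorProduct.map LinearMap.id
          (mm k H ∘ₗ TensorProduct.map (S k H ∘ₗ S k H) LinearMap.id) ∘ₗ
          (TensorProduct.assoc k H H H).toLinearMap ∘ₗ
            TensorProduct.map (cc k H).toLinearMap LinearMap.id)) ∘ₗ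
    (TensorProduct.tensorTensorTensorComm k H (H ⊗[k] H) H H).toLinearMap ∘ₗ
      TensorProduct.map
        ((α k H).toLinearMap ∘ₗ TensorProduct.map (cc k H).toLinearMap LinearMap.id ∘ₗ
          TensorProduct.map (Δ k H) LinearMap.id)
        LinearMap.id

end Stmt1

open Coalgebra HopfAlgebra

namespace HopfAlgebra

section Coalgebra

variable {R A : Type*} [CommSemiring R] [Semiring A] [Algebra R A] [Coalgebra R A]

def twistedComul (f : A →ₗ[R] A) : A →ₗ[R] A ⊗[R] A :=
  f.lTensor A ∘ₗ (TensorProduct.comm R A A).toLinearMap ∘ₗ comul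

def coopConv (f g : A →ₗ[R] A) : A →ₗ[R] A :=
  LinearMap.mul' R A ∘ₗ map f g ∘ₗ (TensorProduct.comm R A A).toLinearMap ∘ₗ comul

def twist (f : A →ₗ[R] A) : A ⊗[R] A →ₗ[R] A ⊗[R] A :=
  map LinearMap.id (LinearMap.mul' R A ∘ₗ map f LinearMap.id) ∘ₗ
    (TensorProduct.assoc R A A A).toLinearMap ∘ₗ
      map (TensorProduct.comm R A A).toLinearMap LinearMap.id ∘ₗ map comul LinearMap.id

lemma twistedComul_apply {ι : Type*} (f : A →ₗ[R] A) {x : A} (r : Repr R x ι) :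
    twistedComul f x = ∑ i ∈ r.index, r.right i ⊗ₜ f (r.left i) := by
  simp [twistedComul, ← r.eq, map_sum]

lemma coopConv_apply {ι : Type*} (f g : A →ₗ[R] A) {x : A} (r : Repr R x ι) :
    coopConv f g x = ∑ i ∈ r.index, f (r.right i) * g (r.left i) := by
  simp [coopConv, ← r.eq, map_sum]

lemma twist_tmul (f : A →ₗ[R] A) (x y : A) :
    twist f (x ⊗ₜ y) = twistedComul f x * (1 ⊗ₜ y) := by
  rw [twistedComul_apply f (ℛ R x)]
  simp [twist, ← (ℛ R x).eq, map_sum, sum_tmul, Finset.sum_mul]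

lemma twist_mul_one_tmul (f : A →ₗ[R] A) (w : A ⊗[R] A) (y : A) :
    twist f (w * (1 ⊗ₜ y)) = twist f w * (1 ⊗ₜ y) := by
  induction w using TensorProduct.induction_on with
  | zero => simp
  | tmul u v => simp [twist_tmul, mul_assoc]
  | add u v hu hv => simp [add_mul, hu, hv]

lemma twist_twistedComul (f g : A →ₗ[R] A) (x : A) :
    twist f (twistedComul g x) = twistedComul (coopConv f g) x := by
  set r := ℛ R x
  have coassoc := congr((LinearMap.lTensor A (LinearMap.mul' R A ∘ₗ map f g ∘ₗ
      (TensorProduct.comm R A A).toLinearMap) ∘ₗ (TensorProduct.comm R (A ⊗[R] A) A).toLinearMap ∘ₗ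
      (TensorProduct.assoc R A A A).symm.toLinearMap)
    $(sum_tmul_tmul_eq r (fun i ↦ ℛ R (r.left i)) (fun i ↦ ℛ R (r.right i))))
  simp only [map_sum, LinearMap.comp_apply, LinearEquiv.coe_coe, assoc_symm_tmul, comm_tmul,
    LinearMap.lTensor_tmul, map_tmul, LinearMap.mul'_apply] at coassoc
  simp only [twistedComul_apply _ r, map_sum, twist_tmul, twistedComul_apply _ (ℛ R (r.right _)),
    coopConv_apply _ _ (ℛ R (r.left _)), Finset.sum_mul, tmul_sum,
    Algebra.TensorProduct.tmul_mul_tmul, mul_one]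
  exact coassoc.symm

lemma twist_comp (f g : A →ₗ[R] A) : twist f ∘ₗ twist g = twist (coopConv f g) := by
  refine TensorProduct.ext' fun x y ↦ ?_
  simp only [LinearMap.comp_apply, twist_tmul, twist_mul_one_tmul, twist_twistedComul]

lemma twist_algebraMap_comp_counit :
    twist (Algebra.linearMap R A ∘ₗ counit) = LinearMap.id := by
  refine TensorProduct.ext' fun x y ↦ ?_
  rw [twist_tmul, twistedComul_apply _ (ℛ R x)]
  simp only [LinearMap.comp_apply, Algebra.linearMap_apply, Algebra.algebraMap_eq_smul_one,
    tmul_smul, smul_tmul']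
  rw [← sum_tmul, sum_counit_smul, Algebra.TensorProduct.tmul_mul_tmul, mul_one, one_mul,
    LinearMap.id_apply]

end Coalgebra

section Bialgebra

variable {R A : Type*} [CommSemiring R] [Semiring A] [Bialgebra R A]

lemma twistedComul_mul (f : A →ₐ[R] A) (x y : A) :
    twistedComul f.toLinearMap (x * y) =
      twistedComul f.toLinearMap x * twistedComul f.toLinearMap y := by
  have hAlgHom : twistedComul f.toLinearMap =
      ((Algebra.TensorProduct.map (AlgHom.id R A) f).comp <|
        (Algebra.TensorProduct.comm R A A).toAlgHom.comp (Bialgebra.comulAlgHom R A)).toLinearMap :=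
    rfl
  simp only [hAlgHom, AlgHom.toLinearMap_apply, map_mul]

lemma twist_tmul_one_mul (f : A →ₐ[R] A) (u : A) (w : A ⊗[R] A) :
    twist f.toLinearMap ((u ⊗ₜ 1) * w) = twistedComul f.toLinearMap u * twist f.toLinearMap w := by
  induction w using TensorProduct.induction_on with
  | zero => simp
  | tmul x y => simp [twist_tmul, twistedComul_mul, mul_assoc]
  | add v w hv hw => simp [mul_add, hv, hw]

end Bialgebra

section Antipode

variable {R A : Type*} [CommSemiring R] [Semiring A] [HopfAlgebra R A]

variable (R A) in
def antipodeSq : A →ₐ[R] A :=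
  .ofLinearMap (antipode R ∘ₗ antipode R) (by simp) (by simp [antipode_mul_antidistrib])

lemma coopConv_antipode_antipodeSq :
    coopConv (antipode R) (antipodeSq R A).toLinearMap = Algebra.linearMap R A ∘ₗ counit := by
  ext x
  simp [coopConv_apply _ _ (ℛ R x), antipodeSq, ← antipode_mul_antidistrib, ← map_sum,
    sum_antipode_mul_eq_algebraMap_counit, Algebra.algebraMap_eq_smul_one]

lemma coopConv_antipodeSq_antipode :
    coopConv (antipodeSq R A).toLinearMap (antipode R) = Algebra.linearMap R A ∘ₗ counit := by
  ext x
  simp [coopConv_apply _ _ (ℛ R x), antipodeSq, ← antipode_mul_antidistrib, ← map_sum,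
    sum_mul_antipode_eq_algebraMap_counit, Algebra.algebraMap_eq_smul_one]

end Antipode

end HopfAlgebra

namespace Stmt1

variable {k : Type} [Field k] {H : Type} [Ring H] [HopfAlgebra k H]

lemma phi_eq_twist : φ k H = twist (antipodeSq k H).toLinearMap := rfl

lemma psi_eq_twist : ψ k H = twist (antipode k) := rfl

lemma ractSrc_tmul (x y a : H) :
    ractSrc k H ((x ⊗ₜ y) ⊗ₜ a) = (x ⊗ₜ 1) * ψ k H (a ⊗ₜ 1) * (1 ⊗ₜ y) := by
  rw [psi_eq_twist, twist_tmul, twistedComul_apply _ (ℛ k a)]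
  simp [ractSrc, Δ, cc, mm, ttc, S, ← (ℛ k a).eq, tmul_sum, map_sum, Finset.mul_sum,
    Finset.sum_mul]

lemma ractTgt_tmul (w : H ⊗[k] H) (a : H) : ractTgt k H (w ⊗ₜ a) = w * (a ⊗ₜ 1) := by
  induction w using TensorProduct.induction_on with
  | zero => simp
  | tmul u v => simp [ractTgt, cc, mm, α]
  | add v w hv hw => simp [add_tmul, add_mul, hv, hw]

lemma lactSrc_tmul (a b : H) (m : H ⊗[k] H) :
    lactSrc k H ((a ⊗ₜ b) ⊗ₜ m) = (a ⊗ₜ 1) * m * (1 ⊗ₜ b) := by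
  induction m using TensorProduct.induction_on with
  | zero => simp
  | tmul u v => simp [lactSrc, cc, mm, ttc]
  | add v w hv hw => simp [tmul_add, mul_add, add_mul, hv, hw]

lemma lactTgt_tmul (a b : H) (w : H ⊗[k] H) :
    lactTgt k H ((a ⊗ₜ b) ⊗ₜ w) =
      twistedComul (antipodeSq k H).toLinearMap a * w * (1 ⊗ₜ b) := by
  induction w using TensorProduct.induction_on with
  | zero => simp
  | tmul u v =>
    rw [twistedComul_apply _ (ℛ k a)]
    simp [lactTgt, Δ, cc, mm, α, S, antipodeSq, ← (ℛ k a).eq, sum_tmul, map_sum, Finset.sum_mul,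
      mul_assoc]
  | add v w hv hw => simp [tmul_add, mul_add, add_mul, hv, hw]

lemma phi_tmul_one_mul_mul_one_tmul (u y : H) (w : H ⊗[k] H) :
    φ k H ((u ⊗ₜ 1) * w * (1 ⊗ₜ y)) =
      twistedComul (antipodeSq k H).toLinearMap u * φ k H w * (1 ⊗ₜ y) := by
  rw [phi_eq_twist, twist_mul_one_tmul, twist_tmul_one_mul]

/-- `φ : R(H^e) → H⊗H` is an isomorphism of `H^e`-`H`-bimodules with
inverse `ψ`. -/
theorem stmt1 :
    (ψ k H ∘ₗ φ k H = LinearMap.id ∧ φ k H ∘ₗ ψ k H = LinearMap.id) ∧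
    (∀ (m : H ⊗[k] H) (a : H), φ k H (ractSrc k H (m ⊗ₜ a)) = ractTgt k H (φ k H m ⊗ₜ a)) ∧
    (∀ (c m : H ⊗[k] H), φ k H (lactSrc k H (c ⊗ₜ m)) = lactTgt k H (c ⊗ₜ φ k H m)) := by
  have psi_comp_phi : ψ k H ∘ₗ φ k H = LinearMap.id := by
    rw [phi_eq_twist, psi_eq_twist, twist_comp, coopConv_antipode_antipodeSq,
      twist_algebraMap_comp_counit]
  have phi_comp_psi : φ k H ∘ₗ ψ k H = LinearMap.id := by
    rw [phi_eq_twist, psi_eq_twist, twist_comp, coopConv_antipodeSq_antipode,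
      twist_algebraMap_comp_counit]
  refine ⟨⟨psi_comp_phi, phi_comp_psi⟩, fun m a ↦ ?_, fun c m ↦ ?_⟩
  · induction m using TensorProduct.induction_on with
    | zero => simp
    | tmul x y =>
      have hφψ : φ k H (ψ k H (a ⊗ₜ 1)) = a ⊗ₜ 1 := LinearMap.congr_fun phi_comp_psi _
      rw [ractSrc_tmul, phi_tmul_one_mul_mul_one_tmul, hφψ, ractTgt_tmul, phi_eq_twist, twist_tmul,
        mul_assoc, mul_assoc]
      simp
    | add v w hv hw => simp only [add_tmul, map_add, hv, hw]
  · induction c using TensorProduct.induction_on with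
    | zero => simp
    | tmul a b => rw [lactSrc_tmul, phi_tmul_one_mul_mul_one_tmul, lactTgt_tmul]
    | add v w hv hw => simp only [add_tmul, map_add, hv, hw]

end Stmt1

end
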